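/- Let n, l ≥ 1 be integers and let N_1, …, N_{2l} be n × n complex positive semidefinite matrices with N_j = A_j A_j* for nonzero matrices A_j ∈ ℂ^{n×n} (1 ≤ j ≤ 2l). Let w = (d_{A_1 A_{1+l}ᵀ}) ∘ (d_{A_2 A_{2+l}ᵀ}) ∘ ⋯ ∘ (d_{A_l A_{2l}ᵀ}) be the entrywise product of the diagonal vectors of A_j A_{j+l}ᵀ for 1 ≤ j ≤ l. Then N_1 ∘ N_2 ∘ ⋯ ∘ N_{2l} ≥ (∏_{j=1}^{l} 1 / min(rank(N_j), rank(N_{j+l}))) · w w* in the Loewner order. -/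

import Mathlib

/-!
For `x : ι → 𝕜` put `S = Bᵀ * diagonal (star x) * A`. Then `x* (A Aᴴ ⊙ B Bᴴ) x = ‖S‖²` (Frobenius
norm) and `x* d = tr S`, where `d` is the diagonal of `A Bᵀ`. With `P` the orthogonal projection onto
the range of `S` we have `tr S = tr (P S)`, so Cauchy–Schwarz gives
`|tr S|² ≤ ‖P‖² ‖S‖² = rank S · ‖S‖²`, and `rank S ≤ min (rank A) (rank B)`. This settles one pair of
factors. The general case follows since the Schur product is monotone in the Loewner order on
positive semidefinite matrices and Schur products of the rank-one matrices `d dᴴ` are again of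
that form.
-/

open Matrix ComplexOrder

namespace Matrix

variable {ι κ τ 𝕜 : Type*} [RCLike 𝕜]

theorem trace_eq_rank_of_isIdempotentElem {K : Type*} [Field K] [Fintype ι] {P : Matrix ι ι K}
    (hP : IsIdempotentElem P) : P.trace = P.rank := by
  classical
  have hproj : LinearMap.IsProj (LinearMap.range P.mulVecLin) P.mulVecLin :=
    LinearMap.IsIdempotentElem.isProj_range _ (hP.map Matrix.toLinAlgEquiv')
  rw [← trace_toLin'_eq, toLin'_apply', hproj.trace, rank]

theorem rank_eq_finrank_range_toEuclideanLin [Fintype ι] [DecidableEq ι] (A : Matrix ι ι 𝕜) :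
    A.rank = Module.finrank 𝕜 (LinearMap.range A.toEuclideanLin) := by
  rw [rank_eq_finrank_range_toLin A (EuclideanSpace.basisFun ι 𝕜).toBasis
    (EuclideanSpace.basisFun ι 𝕜).toBasis]
  rfl

theorem exists_isStarProjection_mul_eq_self [Fintype ι] (S : Matrix ι ι 𝕜) :
    ∃ P : Matrix ι ι 𝕜, IsStarProjection P ∧ P * S = S ∧ P.rank = S.rank := by
  classical
  set V := LinearMap.range S.toEuclideanLin
  set P := (toEuclideanCLM (n := ι) (𝕜 := 𝕜)).symm V.starProjection
  have hP : toEuclideanCLM (n := ι) (𝕜 := 𝕜) P = V.starProjection :=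
    StarAlgEquiv.apply_symm_apply _ _
  refine ⟨P, isStarProjection_starProjection.map (toEuclideanCLM (n := ι) (𝕜 := 𝕜)).symm, ?_, ?_⟩
  · apply EquivLike.injective (toEuclideanCLM (n := ι) (𝕜 := 𝕜))
    rw [map_mul, hP]
    ext1 x
    exact V.starProjection_eq_self_iff.mpr (LinearMap.mem_range_self _ x)
  · rw [rank_eq_finrank_range_toEuclideanLin, rank_eq_finrank_range_toEuclideanLin,
      ← coe_toEuclideanCLM_eq_toEuclideanLin, hP]
    exact congrArg (fun W : Submodule 𝕜 _ => Module.finrank 𝕜 W) V.range_starProjection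

theorem sum_norm_sq_eq_trace_mul_conjTranspose [Fintype ι] [Fintype κ] (M : Matrix ι κ 𝕜) :
    ((∑ i, ∑ j, ‖M i j‖ ^ 2 : ℝ) : 𝕜) = (M * Mᴴ).trace := by
  simp [trace, mul_apply, RCLike.mul_conj]

theorem norm_trace_sq_le_rank_mul_sum_norm_sq [Fintype ι] (S : Matrix ι ι 𝕜) :
    ‖S.trace‖ ^ 2 ≤ S.rank * ∑ i, ∑ j, ‖S i j‖ ^ 2 := by
  obtain ⟨P, hP, hPS, hrank⟩ := exists_isStarProjection_mul_eq_self S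
  have hP_sum : ∑ i, ∑ j, ‖P i j‖ ^ 2 = S.rank := by
    have hPP : P * Pᴴ = P := by
      rw [← star_eq_conjTranspose, hP.isSelfAdjoint.star_eq, hP.isIdempotentElem.eq]
    have := sum_norm_sq_eq_trace_mul_conjTranspose P
    rw [hPP, trace_eq_rank_of_isIdempotentElem hP.isIdempotentElem, hrank] at this
    exact_mod_cast this
  calc ‖S.trace‖ ^ 2 = ‖(P * S).trace‖ ^ 2 := by rw [hPS]
    _ = ‖∑ i, ∑ j, P i j * S j i‖ ^ 2 := rfl
    _ ≤ (∑ i, ∑ j, ‖P i j‖ * ‖S j i‖) ^ 2 := by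
      gcongr
      refine (norm_sum_le _ _).trans (Finset.sum_le_sum fun i _ => ?_)
      exact (norm_sum_le _ _).trans_eq (by simp only [norm_mul])
    _ ≤ (∑ i, ∑ j, ‖P i j‖ ^ 2) * ∑ i, ∑ j, ‖S j i‖ ^ 2 := by
      simp only [← Fintype.sum_prod_type']
      exact Finset.sum_mul_sq_le_sq_mul_sq _ _ _
    _ = S.rank * ∑ i, ∑ j, ‖S i j‖ ^ 2 := by rw [hP_sum, Finset.sum_comm]

theorem star_dotProduct_hadamard_gram_mulVec [Fintype ι] [DecidableEq ι] [Fintype κ]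
    (A B : Matrix ι κ 𝕜) (x : ι → 𝕜) :
    star x ⬝ᵥ ((A * Aᴴ) ⊙ (B * Bᴴ)) *ᵥ x
      = (Bᵀ * diagonal (star x) * A * (Bᵀ * diagonal (star x) * A)ᴴ).trace := by
  rw [dotProduct_mulVec, dotProduct_vecMul_hadamard]
  simp only [transpose_mul, conjTranspose_mul, diagonal_transpose, diagonal_conjTranspose,
    star_star, transpose_conjTranspose, Matrix.mul_assoc]
  rw [trace_mul_comm Bᵀ]
  simp only [Matrix.mul_assoc]
  rfl

theorem star_dotProduct_diag_mul_transpose [Fintype ι] [DecidableEq ι] [Fintype κ]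
    (A B : Matrix ι κ 𝕜) (x : ι → 𝕜) :
    star x ⬝ᵥ (A * Bᵀ).diag = (Bᵀ * diagonal (star x) * A).trace := by
  simp only [dotProduct, trace, diag_apply, mul_apply, transpose_apply, diagonal_apply,
    Finset.mul_sum]
  rw [Finset.sum_comm]
  simp [mul_comm, mul_assoc]

theorem star_dotProduct_vecMulVec_mulVec [Fintype ι] (d x : ι → 𝕜) :
    star x ⬝ᵥ vecMulVec d (star d) *ᵥ x = (‖star x ⬝ᵥ d‖ ^ 2 : ℝ) := by
  rw [dotProduct_mulVec, vecMul_vecMulVec, smul_dotProduct, star_dotProduct d x, smul_eq_mul,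
    RCLike.star_def, RCLike.mul_conj, RCLike.ofReal_pow]

section LoewnerOrder

open scoped MatrixOrder

theorem inv_min_rank_smul_vecMulVec_diag_le_hadamard [Fintype ι] [Fintype κ]
    (A B : Matrix ι κ 𝕜) :
    ((min A.rank B.rank : ℕ) : 𝕜)⁻¹ • vecMulVec (A * Bᵀ).diag (star (A * Bᵀ).diag)
      ≤ (A * Aᴴ) ⊙ (B * Bᴴ) := by
  classical
  set r := min A.rank B.rank
  have hr : (0 : 𝕜) ≤ (r : 𝕜)⁻¹ := by simp
  rw [le_iff, posSemidef_iff_dotProduct_mulVec]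
  refine ⟨(((posSemidef_self_mul_conjTranspose A).hadamard
    (posSemidef_self_mul_conjTranspose B)).isHermitian).sub
    ((posSemidef_vecMulVec_self_star _).smul hr).isHermitian, fun x => ?_⟩
  set S := Bᵀ * diagonal (star x) * A
  have hS : S.rank ≤ r := by
    refine le_min (rank_mul_le_right _ A) ?_
    calc S.rank ≤ (Bᵀ * diagonal (star x)).rank := rank_mul_le_left _ A
      _ ≤ Bᵀ.rank := rank_mul_le_left _ _
      _ = B.rank := rank_transpose B
  have key : (r : ℝ)⁻¹ * ‖S.trace‖ ^ 2 ≤ ∑ i, ∑ j, ‖S i j‖ ^ 2 :=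
    inv_mul_le_of_le_mul₀ (by positivity) (by positivity)
      ((norm_trace_sq_le_rank_mul_sum_norm_sq S).trans (by gcongr))
  rw [sub_mulVec, dotProduct_sub, smul_mulVec, dotProduct_smul, smul_eq_mul,
    star_dotProduct_hadamard_gram_mulVec, star_dotProduct_vecMulVec_mulVec,
    star_dotProduct_diag_mul_transpose, ← sum_norm_sq_eq_trace_mul_conjTranspose, sub_nonneg,
    ← RCLike.ofReal_natCast, ← RCLike.ofReal_inv, ← RCLike.ofReal_mul, RCLike.ofReal_le_ofReal]
  exact key

theorem hadamard_le_hadamard {X X' Y Y' : Matrix ι ι 𝕜} (h₁ : X ≤ X') (h₂ : Y ≤ Y')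
    (hY : 0 ≤ Y) (hX' : 0 ≤ X') : X ⊙ Y ≤ X' ⊙ Y' := by
  rw [le_iff, show X' ⊙ Y' - X ⊙ Y = X' ⊙ (Y' - Y) + (X' - X) ⊙ Y by
    ext i j; simp only [sub_apply, add_apply, hadamard_apply]; ring]
  exact (hX'.posSemidef.hadamard h₂).add (h₁.hadamard hY.posSemidef)

theorem of_prod_insert_eq_hadamard [DecidableEq τ] {s : Finset τ} {a : τ} (ha : a ∉ s)
    (M : τ → Matrix ι ι 𝕜) :
    (of fun i j => ∏ t ∈ insert a s, M t i j) = M a ⊙ of fun i j => ∏ t ∈ s, M t i j := by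
  ext i j
  simp [Finset.prod_insert ha]

theorem of_prod_nonneg [Fintype ι] {s : Finset τ} {M : τ → Matrix ι ι 𝕜}
    (hM : ∀ t ∈ s, 0 ≤ M t) : 0 ≤ of fun i j => ∏ t ∈ s, M t i j := by
  classical
  induction s using Finset.induction_on with
  | empty =>
    convert (posSemidef_vecMulVec_self_star (1 : ι → 𝕜)).nonneg
    ext i j
    rw [vecMulVec_apply]
    simp
  | insert a s ha ih =>
    rw [of_prod_insert_eq_hadamard ha]
    exact ((hM a (s.mem_insert_self a)).posSemidef.hadamard
      (ih fun t ht => hM t (Finset.mem_insert_of_mem ht)).posSemidef).nonneg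

theorem of_prod_le_of_prod [Fintype ι] {s : Finset τ} {L M : τ → Matrix ι ι 𝕜}
    (h : ∀ t ∈ s, L t ≤ M t) (hL : ∀ t ∈ s, 0 ≤ L t) :
    (of fun i j => ∏ t ∈ s, L t i j) ≤ of fun i j => ∏ t ∈ s, M t i j := by
  classical
  induction s using Finset.induction_on with
  | empty => rfl
  | insert a s ha ih =>
    have hs : ∀ t ∈ s, t ∈ insert a s := fun t ht => Finset.mem_insert_of_mem ht
    rw [of_prod_insert_eq_hadamard ha, of_prod_insert_eq_hadamard ha]
    exact hadamard_le_hadamard (h a (s.mem_insert_self a))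
      (ih (fun t ht => h t (hs t ht)) fun t ht => hL t (hs t ht))
      (of_prod_nonneg fun t ht => hL t (hs t ht))
      ((hL a (s.mem_insert_self a)).trans (h a (s.mem_insert_self a)))

end LoewnerOrder

theorem of_prod_smul_vecMulVec (s : Finset τ) (c : τ → 𝕜) (d : τ → ι → 𝕜) :
    (of fun i j => ∏ t ∈ s, (c t • vecMulVec (d t) (star (d t))) i j)
      = (∏ t ∈ s, c t) • vecMulVec (fun i => ∏ t ∈ s, d t i) (star fun i => ∏ t ∈ s, d t i) := by
  ext i j
  simp [vecMulVec_apply, Finset.prod_mul_distrib, star_prod]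

end Matrix

theorem schur_product_lower_bound_many_factors_general
    (n l : ℕ)
    (A B : Fin l → Matrix (Fin n) (Fin n) ℂ)
    (N : Fin l → Matrix (Fin n) (Fin n) ℂ) (N' : Fin l → Matrix (Fin n) (Fin n) ℂ)
    (hN : ∀ t, N t = A t * (A t)ᴴ) (hN' : ∀ t, N' t = B t * (B t)ᴴ)
    (w : Fin n → ℂ) (hw : w = fun i => ∏ t, (A t * (B t)ᵀ) i i) :
    ((Matrix.of fun i j : Fin n => ∏ t, (N t i j * N' t i j)) -
      (∏ t, ((min (N t).rank (N' t).rank : ℕ) : ℂ)⁻¹) •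
        vecMulVec w (star w)).PosSemidef := by
  open scoped MatrixOrder in
  have hfactor (t : Fin l) :
      ((min (N t).rank (N' t).rank : ℕ) : ℂ)⁻¹ •
          vecMulVec (A t * (B t)ᵀ).diag (star (A t * (B t)ᵀ).diag) ≤ N t ⊙ N' t := by
    rw [hN, hN', rank_self_mul_conjTranspose, rank_self_mul_conjTranspose]
    exact inv_min_rank_smul_vecMulVec_diag_le_hadamard (A t) (B t)
  have hprod := of_prod_le_of_prod (s := Finset.univ) (fun t _ => hfactor t)
    fun t _ => ((posSemidef_vecMulVec_self_star _).smul (by simp)).nonneg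
  rw [of_prod_smul_vecMulVec] at hprod
  subst hw
  exact le_iff.mp hprod

theorem schur_product_lower_bound_many_factors
    (n l : ℕ) (hn : 1 ≤ n) (hl : 1 ≤ l)
    (A B : Fin l → Matrix (Fin n) (Fin n) ℂ)
    (hA : ∀ t, A t ≠ 0) (hB : ∀ t, B t ≠ 0)
    (N : Fin l → Matrix (Fin n) (Fin n) ℂ) (N' : Fin l → Matrix (Fin n) (Fin n) ℂ)
    (hN : ∀ t, N t = A t * (A t)ᴴ) (hN' : ∀ t, N' t = B t * (B t)ᴴ)
    (w : Fin n → ℂ) (hw : w = fun i => ∏ t, (A t * (B t)ᵀ) i i) :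
    ((Matrix.of fun i j : Fin n => ∏ t, (N t i j * N' t i j)) -
      (∏ t, ((min (N t).rank (N' t).rank : ℕ) : ℂ)⁻¹) •
        vecMulVec w (star w)).PosSemidef :=
  schur_product_lower_bound_many_factors_general n l A B N N' hN hN' w hw
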